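/- arXiv:2309.04839 — 2 statements merged into one kernel-verified Lean document; each statement's English description precedes it below -/
import Mathlib

section
/- Let h : ℝⁿ → ℝ be differentiable, q : [0,∞) → ℝⁿ differentiable with q̇ = μ + d where ‖d(t)‖ ≤ D for all t, and let β, λ > 0. Define h̄(q,μ) = (∂h/∂q)·μ - (1/(2β))‖∂h/∂q‖² - βD²/2 + λh(q). If h̄(q(t), μ(t)) ≥ 0, then (d/dt)h(q(t)) + λ h(q(t)) ≥ 0. -/
open scoped RealInnerProductSpace

theorem neg_young_le_inner_of_norm_le {E : Type*} [NormedAddCommGroup E] [InnerProductSpace ℝ E]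
    {β D : ℝ} (hβ : 0 < β) (g d : E) (hd : ‖d‖ ≤ D) :
    -(1 / (2 * β)) * ‖g‖ ^ 2 - β * D ^ 2 / 2 ≤ ⟪g, d⟫ := by
  have hsq : ‖d‖ ^ 2 ≤ D ^ 2 := pow_le_pow_left₀ (norm_nonneg d) hd 2
  have hyoung : 2 * ‖d‖ * ‖g‖ ≤ β * ‖d‖ ^ 2 + β⁻¹ * ‖g‖ ^ 2 := two_mul_le_add_mul_sq hβ
  have hcs : -(‖g‖ * ‖d‖) ≤ ⟪g, d⟫ := (abs_le.mp (abs_real_inner_le_norm g d)).1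
  have hinv : 1 / (2 * β) = β⁻¹ / 2 := by field_simp
  rw [hinv]
  nlinarith

theorem DifferentiableAt.hasDerivAt_comp_inner_gradient {E : Type*} [NormedAddCommGroup E]
    [InnerProductSpace ℝ E] [CompleteSpace E] {h : E → ℝ} {q : ℝ → E} {q' : E} {t : ℝ}
    (hh : DifferentiableAt ℝ h (q t)) (hq : HasDerivAt q q' t) :
    HasDerivAt (fun s => h (q s)) ⟪gradient h (q t), q'⟫ t := by
  rw [inner_gradient_left]
  exact hh.hasFDerivAt.comp_hasDerivAt t hq

theorem stmt_10_general (n : ℕ)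
    (h : EuclideanSpace ℝ (Fin n) → ℝ) (hdiff : Differentiable ℝ h)
    (q μ d : ℝ → EuclideanSpace ℝ (Fin n))
    (D β lam : ℝ) (hβ : 0 < β)
    (hq : ∀ t, HasDerivAt q (μ t + d t) t)
    (hd : ∀ t, ‖d t‖ ≤ D)
    (t : ℝ)
    (hbar : ⟪gradient h (q t), μ t⟫ - (1 / (2 * β)) * ‖gradient h (q t)‖ ^ 2
        - β * D ^ 2 / 2 + lam * h (q t) ≥ 0) :
    deriv (fun s => h (q s)) t + lam * h (q t) ≥ 0 := by
  rw [((hdiff (q t)).hasDerivAt_comp_inner_gradient (hq t)).deriv, inner_add_right]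
  linarith [neg_young_le_inner_of_norm_le hβ (gradient h (q t)) (d t) (hd t)]

theorem stmt_10 (n : ℕ)
    (h : EuclideanSpace ℝ (Fin n) → ℝ) (hdiff : Differentiable ℝ h)
    (q μ d : ℝ → EuclideanSpace ℝ (Fin n))
    (D β lam : ℝ) (hβ : 0 < β) (hlam : 0 < lam)
    (hq : ∀ t, HasDerivAt q (μ t + d t) t)
    (hd : ∀ t, ‖d t‖ ≤ D)
    (t : ℝ)
    (hbar : ⟪gradient h (q t), μ t⟫ - (1 / (2 * β)) * ‖gradient h (q t)‖ ^ 2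
        - β * D ^ 2 / 2 + lam * h (q t) ≥ 0) :
    deriv (fun s => h (q s)) t + lam * h (q t) ≥ 0 :=
  stmt_10_general n h hdiff q μ d D β lam hβ hq hd t hbar
end

section
/- Let h : ℝⁿ → ℝ be twice continuously differentiable, q, μ : [0,∞) → ℝⁿ differentiable with q̇ = μ + d, μ̇ = ν, ‖d(t)‖ ≤ D, and let β, λ, γ > 0. Define h̄(q,μ) = ∇h(q)·μ - (1/(2β))‖∇h(q)‖² - βD²/2 + λh(q) and ℳ(q,μ) = μᵀ H_h(q) - (1/β)∇h(q)ᵀ H_h(q) + λ∇h(q)ᵀ (a row vector), where H_h is the Hessian of h. If at time t the control satisfies ∇h(q)·ν + ℳ·μ - ‖ℳ‖ D + γ h̄ ≥ 0, then (d/dt) h̄(q(t),μ(t)) ≥ -γ h̄(q(t),μ(t)). -/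
/-!
Differentiating `h̄(q, μ)` along the trajectory gives `⟪∇h(q), ν⟫ + ⟪ℳ, q̇⟫`, where the Hessian
terms collect into `ℳ` because the Hessian of a `C²` function is symmetric. Splitting
`q̇ = μ + d` and bounding `⟪ℳ, d⟫ ≥ -‖ℳ‖ D` by Cauchy–Schwarz, the admissibility condition on `ν`
is exactly the claimed inequality.
-/

open scoped RealInnerProductSpace

open InnerProductSpace

variable {E : Type*} [NormedAddCommGroup E] [InnerProductSpace ℝ E]

theorem neg_norm_mul_le_real_inner {D : ℝ} (x : E) {y : E} (hy : ‖y‖ ≤ D) :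
    -(‖x‖ * D) ≤ ⟪x, y⟫ :=
  (neg_le_neg (mul_le_mul_of_nonneg_left hy (norm_nonneg x))).trans
    (neg_le_of_abs_le (abs_real_inner_le_norm x y))

variable [CompleteSpace E]

theorem fderiv_gradient_apply (f : E → ℝ) (x v : E) :
    fderiv ℝ (gradient f) x v = (toDual ℝ E).symm (fderiv ℝ (fderiv ℝ f) x v) := by
  change fderiv ℝ ((toDual ℝ E).symm ∘ fderiv ℝ f) x v = _
  rw [(toDual ℝ E).symm.comp_fderiv]
  rfl

theorem IsSymmSndFDerivAt.inner_fderiv_gradient_comm {f : E → ℝ} {x : E}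
    (hf : IsSymmSndFDerivAt ℝ f x) (v w : E) :
    ⟪fderiv ℝ (gradient f) x v, w⟫ = ⟪fderiv ℝ (gradient f) x w, v⟫ := by
  simpa only [fderiv_gradient_apply, toDual_symm_apply] using hf v w

theorem ContDiffAt.differentiableAt_gradient {f : E → ℝ} {x : E} (hf : ContDiffAt ℝ 2 f x) :
    DifferentiableAt ℝ (gradient f) x :=
  (toDual ℝ E).symm.toContinuousLinearEquiv.differentiableAt.comp x
    ((hf.fderiv_right (m := 1) (by norm_num)).differentiableAt one_ne_zero)

noncomputable section

def robustBarrier (f : E → ℝ) (β D lam : ℝ) (x v : E) : ℝ :=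
  ⟪gradient f x, v⟫ - (1 / (2 * β)) * ‖gradient f x‖ ^ 2 - β * D ^ 2 / 2 + lam * f x

/-- The row vector `ℳ` of the paper, as a vector: the derivative of `robustBarrier` along
`(q̇, μ̇)` is `⟪∇f(q), μ̇⟫ + ⟪ℳ, q̇⟫`. -/
def robustBarrierCoeff (f : E → ℝ) (β lam : ℝ) (x v : E) : E :=
  fderiv ℝ (gradient f) x v - (1 / β) • fderiv ℝ (gradient f) x (gradient f x)
    + lam • gradient f x

end

theorem hasDerivAt_robustBarrier {f : E → ℝ} {q μ : ℝ → E} {q' μ' : E} {t : ℝ}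
    (β D lam : ℝ) (hf : ContDiffAt ℝ 2 f (q t))
    (hq : HasDerivAt q q' t) (hμ : HasDerivAt μ μ' t) :
    HasDerivAt (fun s => robustBarrier f β D lam (q s) (μ s))
      (⟪gradient f (q t), μ'⟫ + ⟪robustBarrierCoeff f β lam (q t) (μ t), q'⟫) t := by
  set H := fderiv ℝ (gradient f) (q t)
  have hsymm := (hf.isSymmSndFDerivAt (by simp [minSmoothness_of_isRCLikeNormedField]))
    |>.inner_fderiv_gradient_comm
  have hgrad : HasDerivAt (fun s => gradient f (q s)) (H q') t :=
    hf.differentiableAt_gradient.hasFDerivAt.comp_hasDerivAt t hq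
  have hval : HasDerivAt (fun s => f (q s)) ⟪gradient f (q t), q'⟫ t := by
    rw [inner_gradient_left]
    exact (hf.differentiableAt two_ne_zero).hasFDerivAt.comp_hasDerivAt t hq
  have hbarrier : HasDerivAt (fun s => robustBarrier f β D lam (q s) (μ s))
      (⟪gradient f (q t), μ'⟫ + ⟪H q', μ t⟫ - 1 / (2 * β) * (2 * ⟪gradient f (q t), H q'⟫)
        + lam * ⟪gradient f (q t), q'⟫) t :=
    (((hgrad.inner ℝ hμ).sub (hgrad.norm_sq.const_mul _)).sub_const _).add (hval.const_mul lam)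
  refine hbarrier.congr_deriv ?_
  simp only [robustBarrierCoeff, inner_add_left, inner_sub_left, real_inner_smul_left]
  rw [hsymm (μ t) q', hsymm (gradient f (q t)) q', real_inner_comm (H q')]
  ring

theorem stmt_18_general (n : ℕ)
    (h : EuclideanSpace ℝ (Fin n) → ℝ) (hsmooth : ContDiff ℝ 2 h)
    (q μ d ν : ℝ → EuclideanSpace ℝ (Fin n))
    (D β lam γ : ℝ)
    (hq : ∀ t, HasDerivAt q (μ t + d t) t)
    (hμ : ∀ t, HasDerivAt μ (ν t) t)
    (hd : ∀ t, ‖d t‖ ≤ D)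
    (hbar : ℝ → ℝ)
    (hbardef : ∀ s, hbar s =
      ⟪gradient h (q s), μ s⟫ - (1 / (2 * β)) * ‖gradient h (q s)‖ ^ 2
        - β * D ^ 2 / 2 + lam * h (q s))
    (M : ℝ → EuclideanSpace ℝ (Fin n))
    (hMdef : ∀ s, M s =
      (fderiv ℝ (gradient h) (q s)) (μ s)
        - (1 / β) • (fderiv ℝ (gradient h) (q s)) (gradient h (q s))
        + lam • gradient h (q s))
    (t : ℝ)
    (hcond : ⟪gradient h (q t), ν t⟫ + ⟪M t, μ t⟫ - ‖M t‖ * D + γ * hbar t ≥ 0) :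
    deriv hbar t ≥ -γ * hbar t := by
  have hbar_eq : hbar = fun s => robustBarrier h β D lam (q s) (μ s) := funext hbardef
  have hM : M t = robustBarrierCoeff h β lam (q t) (μ t) := hMdef t
  have hderiv : deriv hbar t = ⟪gradient h (q t), ν t⟫ + ⟪M t, μ t⟫ + ⟪M t, d t⟫ := by
    rw [hbar_eq, (hasDerivAt_robustBarrier β D lam hsmooth.contDiffAt (hq t) (hμ t)).deriv, ← hM,
      inner_add_right, add_assoc]
  rw [hderiv]
  linarith [neg_norm_mul_le_real_inner (M t) (hd t)]

theorem stmt_18 (n : ℕ)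
    (h : EuclideanSpace ℝ (Fin n) → ℝ) (hsmooth : ContDiff ℝ 2 h)
    (q μ d ν : ℝ → EuclideanSpace ℝ (Fin n))
    (D β lam γ : ℝ) (hβ : 0 < β) (hlam : 0 < lam) (hγ : 0 < γ)
    (hq : ∀ t, HasDerivAt q (μ t + d t) t)
    (hμ : ∀ t, HasDerivAt μ (ν t) t)
    (hd : ∀ t, ‖d t‖ ≤ D)
    (hbar : ℝ → ℝ)
    (hbardef : ∀ s, hbar s =
      ⟪gradient h (q s), μ s⟫ - (1 / (2 * β)) * ‖gradient h (q s)‖ ^ 2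
        - β * D ^ 2 / 2 + lam * h (q s))
    (M : ℝ → EuclideanSpace ℝ (Fin n))
    (hMdef : ∀ s, M s =
      (fderiv ℝ (gradient h) (q s)) (μ s)
        - (1 / β) • (fderiv ℝ (gradient h) (q s)) (gradient h (q s))
        + lam • gradient h (q s))
    (t : ℝ)
    (hcond : ⟪gradient h (q t), ν t⟫ + ⟪M t, μ t⟫ - ‖M t‖ * D + γ * hbar t ≥ 0) :
    deriv hbar t ≥ -γ * hbar t :=
  stmt_18_general n h hsmooth q μ d ν D β lam γ hq hμ hd hbar hbardef M hMdef t hcond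
end
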